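/- arXiv:1505.02415 — 2 statements merged into one kernel-verified Lean document; each statement's English description precedes it below -/
import Mathlib

section
/- Let η ∈ 𝔻 and β = −2η/(1 + |η|²), and let p : 𝔻 → 𝔻 be any holomorphic function with |p| < 1 on 𝔻 and boundary values of modulus 1 a.e., satisfying p(0) = η². Then the function h(λ) = (β + conj(β)·p(λ), p(λ)) maps 𝔻 into Γ, has h(0) = (−2η, η²), and |β| ≤ 1 with the point (β + conj(β)w, w) ∈ Γ for all w ∈ 𝔻⁻. -/
open Complex ComplexConjugate MeasureTheory

/-- The closed symmetrized bidisc, via the membership criterion. -/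
def symGamma : Set (ℂ × ℂ) :=
  {x | ‖x.1‖ ≤ 2 ∧
    ‖x.1 - conj x.1 * x.2‖ ≤ 1 - ‖x.2‖ ^ 2}

/- For `s = β + conj β * w` one has `s - conj s * w = β * (1 - |w|²)`, so the second condition
of the criterion reduces to `|β| ≤ 1`. -/
theorem mk_mem_symGamma_of_norm_le_one {β w : ℂ} (hβ : ‖β‖ ≤ 1) (hw : ‖w‖ ≤ 1) :
    (β + conj β * w, w) ∈ symGamma := by
  have hw2 : ‖w‖ ^ 2 ≤ 1 := pow_le_one₀ (norm_nonneg w) hw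
  refine ⟨?_, ?_⟩
  · calc ‖β + conj β * w‖ ≤ ‖β‖ + ‖β‖ * ‖w‖ := by
          simpa only [norm_mul, norm_conj] using norm_add_le β (conj β * w)
      _ ≤ 1 + 1 * 1 := by gcongr
      _ = 2 := by norm_num
  · have hsub : (β + conj β * w) - conj (β + conj β * w) * w = β * ((1 - ‖w‖ ^ 2 : ℝ) : ℂ) := by
      simp only [map_add, map_mul, conj_conj, ofReal_sub, ofReal_one, ofReal_pow]
      linear_combination (-β) * mul_conj' w
    calc ‖(β + conj β * w) - conj (β + conj β * w) * w‖ = ‖β‖ * (1 - ‖w‖ ^ 2) := by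
          rw [hsub, norm_mul, norm_real, Real.norm_of_nonneg (by linarith)]
      _ ≤ 1 - ‖w‖ ^ 2 := mul_le_of_le_one_left (by linarith) hβ

theorem norm_two_mul_div_one_add_sq_norm_le_one (η : ℂ) :
    ‖-2 * η / (1 + (‖η‖ : ℂ) ^ 2)‖ ≤ 1 := by
  have hden : (0 : ℝ) < 1 + ‖η‖ ^ 2 := by positivity
  rw [← ofReal_pow, ← ofReal_one, ← ofReal_add, norm_div, norm_real,
    Real.norm_of_nonneg hden.le, div_le_one hden]
  simp only [norm_mul, norm_neg, norm_ofNat]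
  nlinarith [sq_nonneg (‖η‖ - 1)]

theorem add_conj_mul_sq_eq (η : ℂ) :
    -2 * η / (1 + (‖η‖ : ℂ) ^ 2) + conj (-2 * η / (1 + (‖η‖ : ℂ) ^ 2)) * η ^ 2 = -2 * η := by
  have hden : (1 + (‖η‖ : ℂ) ^ 2) ≠ 0 := by
    rw [← ofReal_pow, ← ofReal_one, ← ofReal_add, ofReal_ne_zero]
    positivity
  simp only [map_div₀, map_mul, map_neg, map_add, map_pow, map_one, map_ofNat, conj_ofReal]
  field_simp
  linear_combination (-η) * mul_conj' η

theorem flat_disc_in_Gamma_general (η : ℂ) (β : ℂ)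
    (hβ : β = -2 * η / (1 + (‖η‖ : ℂ) ^ 2))
    (p : ℂ → ℂ)
    (hlt : ∀ l : ℂ, ‖l‖ < 1 → ‖p l‖ < 1)
    (hp0 : p 0 = η ^ 2) :
    (∀ l : ℂ, ‖l‖ < 1 → (β + conj β * p l, p l) ∈ symGamma) ∧
    (β + conj β * p 0, p 0) = (-2 * η, η ^ 2) ∧
    ‖β‖ ≤ 1 ∧
    ∀ w : ℂ, ‖w‖ ≤ 1 → (β + conj β * w, w) ∈ symGamma := by
  subst hβ
  have hβ1 := norm_two_mul_div_one_add_sq_norm_le_one η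
  refine ⟨fun l hl => mk_mem_symGamma_of_norm_le_one hβ1 (hlt l hl).le, ?_, hβ1,
    fun w hw => mk_mem_symGamma_of_norm_le_one hβ1 hw⟩
  rw [hp0, add_conj_mul_sq_eq]

theorem flat_disc_in_Gamma (η : ℂ) (hη : ‖η‖ < 1) (β : ℂ)
    (hβ : β = -2 * η / (1 + (‖η‖ : ℂ) ^ 2))
    (p : ℂ → ℂ) (hol : DifferentiableOn ℂ p (Metric.ball (0 : ℂ) 1))
    (hlt : ∀ l : ℂ, ‖l‖ < 1 → ‖p l‖ < 1)
    (hbdry : ∀ᵐ θ : ℝ, ∃ l : ℂ, ‖l‖ = 1 ∧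
      Filter.Tendsto (fun r : ℝ => p ((r : ℂ) * Complex.exp (θ * Complex.I)))
        (nhdsWithin 1 (Set.Iio 1)) (nhds l))
    (hp0 : p 0 = η ^ 2) :
    (∀ l : ℂ, ‖l‖ < 1 → (β + conj β * p l, p l) ∈ symGamma) ∧
    (β + conj β * p 0, p 0) = (-2 * η, η ^ 2) ∧
    ‖β‖ ≤ 1 ∧
    ∀ w : ℂ, ‖w‖ ≤ 1 → (β + conj β * w, w) ∈ symGamma :=
  flat_disc_in_Gamma_general η β hβ p hlt hp0
end

section
/- Let η ∈ 𝕋, κ ∈ 𝕋, α ∈ 𝔻, and define p(λ) = η²κ(λ − α)/(1 − conj(α)λ) and s(λ) = −η − conj(η)·p(λ) for λ ∈ 𝔻. Then for every λ ∈ 𝔻, the point (s(λ), p(λ)) lies in Γ, and for every λ ∈ 𝕋 it lies in bΓ. -/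
open Complex ComplexConjugate

/-- The distinguished boundary of the symmetrized bidisc, via the membership criterion. -/
def bGamma : Set (ℂ × ℂ) :=
  {x | ‖x.1‖ ≤ 2 ∧ ‖x.2‖ = 1 ∧ x.1 = conj x.1 * x.2}

/-!
The point is `(s, p) = (-η - η̄ p, p)`, and for such a point the defining quantity of `Γ` is
explicit: `s - s̄ p = -η (1 - |p|²)`. So membership in `Γ` (resp. `bΓ`) reduces to `|p| ≤ 1`
(resp. `|p| = 1`), which is the classical behaviour of the Blaschke factor `(λ - α)/(1 - ᾱλ)`
on the disc and on the circle, read off from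
`|1 - ᾱλ|² - |λ - α|² = (1 - |α|²)(1 - |λ|²)`.
-/

lemma norm_one_sub_conj_mul_sq_sub_norm_sub_sq (α l : ℂ) :
    ‖1 - conj α * l‖ ^ 2 - ‖l - α‖ ^ 2 = (1 - ‖α‖ ^ 2) * (1 - ‖l‖ ^ 2) := by
  apply ofReal_injective
  push_cast
  simp only [← mul_conj', map_sub, map_mul, map_one, conj_conj]
  ring

section Blaschke

variable {α l : ℂ}

lemma one_sub_conj_mul_ne_zero (hα : ‖α‖ < 1) (hl : ‖l‖ ≤ 1) : 1 - conj α * l ≠ 0 := by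
  have : ‖conj α * l‖ < 1 := by
    rw [norm_mul, norm_conj]
    nlinarith [norm_nonneg α, norm_nonneg l]
  intro h
  rw [← sub_eq_zero.mp h, norm_one] at this
  exact this.false

lemma norm_blaschke_le_one (hα : ‖α‖ < 1) (hl : ‖l‖ ≤ 1) :
    ‖(l - α) / (1 - conj α * l)‖ ≤ 1 := by
  have hden := norm_pos_iff.mpr (one_sub_conj_mul_ne_zero hα hl)
  rw [norm_div, div_le_one hden]
  refine pow_le_pow_iff_left₀ (norm_nonneg _) hden.le two_ne_zero |>.mp ?_
  have := norm_one_sub_conj_mul_sq_sub_norm_sub_sq α l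
  have hα2 : ‖α‖ ^ 2 ≤ 1 := pow_le_one₀ (norm_nonneg α) hα.le
  have hl2 : ‖l‖ ^ 2 ≤ 1 := pow_le_one₀ (norm_nonneg l) hl
  nlinarith [mul_nonneg (sub_nonneg.mpr hα2) (sub_nonneg.mpr hl2)]

lemma norm_blaschke_eq_one (hα : ‖α‖ < 1) (hl : ‖l‖ = 1) :
    ‖(l - α) / (1 - conj α * l)‖ = 1 := by
  have hden := norm_pos_iff.mpr (one_sub_conj_mul_ne_zero hα hl.le)
  rw [norm_div, div_eq_one_iff_eq hden.ne']
  refine (pow_left_inj₀ (norm_nonneg _) hden.le two_ne_zero).mp ?_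
  have := norm_one_sub_conj_mul_sq_sub_norm_sub_sq α l
  simp only [hl] at this
  linarith

end Blaschke

lemma neg_sub_conj_mul_sub_conj_mul (η p : ℂ) :
    (-η - conj η * p) - conj (-η - conj η * p) * p = -η * (1 - ‖p‖ ^ 2) := by
  rw [← conj_mul' p]
  simp only [map_sub, map_neg, map_mul, conj_conj]
  ring

section SymmetrizedBidisc

variable {η p : ℂ}

lemma norm_neg_sub_conj_mul_le_two (hη : ‖η‖ = 1) (hp : ‖p‖ ≤ 1) : ‖-η - conj η * p‖ ≤ 2 :=
  calc ‖-η - conj η * p‖ ≤ ‖-η‖ + ‖conj η * p‖ := norm_sub_le _ _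
    _ = 1 + ‖p‖ := by rw [norm_neg, norm_mul, norm_conj, hη, one_mul]
    _ ≤ 2 := by linarith

lemma mem_symGamma_of_norm_le_one (hη : ‖η‖ = 1) (hp : ‖p‖ ≤ 1) :
    (-η - conj η * p, p) ∈ symGamma := by
  refine ⟨norm_neg_sub_conj_mul_le_two hη hp, le_of_eq ?_⟩
  have : (1 : ℂ) - ‖p‖ ^ 2 = ((1 - ‖p‖ ^ 2 : ℝ) : ℂ) := by push_cast; rfl
  rw [neg_sub_conj_mul_sub_conj_mul, norm_mul, norm_neg, hη, one_mul, this, norm_real,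
    Real.norm_of_nonneg (by nlinarith [norm_nonneg p])]

lemma mem_bGamma_of_norm_eq_one (hη : ‖η‖ = 1) (hp : ‖p‖ = 1) :
    (-η - conj η * p, p) ∈ bGamma := by
  refine ⟨norm_neg_sub_conj_mul_le_two hη hp.le, hp, sub_eq_zero.mp ?_⟩
  rw [neg_sub_conj_mul_sub_conj_mul, hp]
  norm_num

end SymmetrizedBidisc

theorem superficial_Gamma_inner (η κ α : ℂ)
    (hη : ‖η‖ = 1) (hκ : ‖κ‖ = 1) (hα : ‖α‖ < 1)
    (p s : ℂ → ℂ)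
    (hp : ∀ l : ℂ, p l = η ^ 2 * κ * (l - α) / (1 - conj α * l))
    (hs : ∀ l : ℂ, s l = -η - conj η * p l) :
    (∀ l : ℂ, ‖l‖ < 1 → (s l, p l) ∈ symGamma) ∧
    (∀ l : ℂ, ‖l‖ = 1 → (s l, p l) ∈ bGamma) := by
  have norm_p : ∀ l, ‖p l‖ = ‖(l - α) / (1 - conj α * l)‖ := fun l => by
    rw [hp, mul_div_assoc, norm_mul, norm_mul, norm_pow, hη, hκ, one_pow, one_mul, one_mul]
  refine ⟨fun l hl => ?_, fun l hl => ?_⟩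
  · rw [hs]
    exact mem_symGamma_of_norm_le_one hη (norm_p l ▸ norm_blaschke_le_one hα hl.le)
  · rw [hs]
    exact mem_bGamma_of_norm_eq_one hη (norm_p l ▸ norm_blaschke_eq_one hα hl)
end
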